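/- Let T be a string, τ ≥ 1, and Sync a τ-synchronizing set of T. If R = T[a..b] is a run of T with period p ≥ 2τ - 1, then Sync ∩ [a .. a+p) is non-empty; consequently R has a well-defined sparse-Lyndon position (the position i in Sync ∩ [a..a+p) minimizing T[i..n) lexicographically) and this position is unique. -/

import Mathlib

open List

variable {α : Type*}

/-- `frag T a b` is the fragment `T[a..b]` (inclusive, 0-based). -/
def frag (T : List α) (a b : ℕ) : List α := (T.drop a).take (b + 1 - a)

/-- `p` is a period of `S`: `0 < p ≤ |S|` and `S[i] = S[i+p]` for all valid `i`. -/
def IsPeriodOf (p : ℕ) (S : List α) : Prop :=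
  0 < p ∧ p ≤ S.length ∧ ∀ i : ℕ, i + p < S.length → S[i]? = S[i + p]?

/-- The smallest period of `S`. -/
noncomputable def minPeriod (S : List α) : ℕ := sInf {p | IsPeriodOf p S}

/-- `T[a..b]` is a run: periodic (its smallest period occurs at least twice)
and maximal on both sides. -/
def IsRun (T : List α) (a b : ℕ) : Prop :=
  a ≤ b ∧ b < T.length ∧
  2 * minPeriod (frag T a b) ≤ b + 1 - a ∧
  (a = 0 ∨ T[a - 1]? ≠ T[a - 1 + minPeriod (frag T a b)]?) ∧
  (b = T.length - 1 ∨ T[b + 1]? ≠ T[b + 1 - minPeriod (frag T a b)]?)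

/-- `W` occurs in `T` at position `s`. -/
def OccursAt (T : List α) (s : ℕ) (W : List α) : Prop :=
  s + W.length ≤ T.length ∧ (T.drop s).take W.length = W

/-- The set of distinct square substrings of `T`. -/
def Squares (T : List α) : Set (List α) :=
  {W | ∃ X : List α, X ≠ [] ∧ W = X ++ X ∧ W <:+: T}

/-- A non-empty string is primitive if it is not a proper power. -/
def Primitive (U : List α) : Prop :=
  U ≠ [] ∧ ∀ (V : List α) (k : ℕ), U = (List.replicate k V).flatten → k = 1

/-- Cyclic rotation moving the first `c` characters to the end. -/
def rot (c : ℕ) (L : List α) : List α := L.drop c ++ L.take c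

/-- `lam` is the Lyndon root of a periodic string `S`: the lexicographically
smallest rotation of `S[0..per(S))`. -/
def LyndonRootOf [LinearOrder α] (S lam : List α) : Prop :=
  (∃ c < minPeriod S, lam = rot c (S.take (minPeriod S))) ∧
  ∀ c < minPeriod S, lam ≤ rot c (S.take (minPeriod S))

/-- Squares generated by a periodic string `U`: squares contained in `U`
whose smallest period equals that of `U`. -/
def FragSquares (U : List α) : Set (List α) :=
  {W | ∃ X : List α, X ≠ [] ∧ W = X ++ X ∧ W <:+: U ∧ minPeriod W = minPeriod U}

/-- `subper U`: the minimum of `per(X)` over squares `X²` generated by `U`. -/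
noncomputable def subper (U : List α) : ℕ :=
  sInf {q | ∃ X : List α, X ≠ [] ∧ (X ++ X) <:+: U ∧
    minPeriod (X ++ X) = minPeriod U ∧ minPeriod X = q}

/-- Fragments `[a..b]` and `[a'..b']` are neighboring:
`[a-1..b+1] ∩ [a'..b'] ≠ ∅`. -/
def Neighboring (a b a' b' : ℕ) : Prop := a ≤ b' + 1 ∧ a' ≤ b + 1

/-- `T[x..y]` is a layer of the pyramid of the neighboring runs
`F = T[a..b]` and `F' = T[a'..b']` (with `a < a'`): a subperiodic run `R`
with `subper(R) = per(F)` such that `R ∩ (F ∪ F')` is periodic with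
period `per(R)`. -/
def IsLayer (T : List α) (a b a' b' x y : ℕ) : Prop :=
  IsRun T x y ∧
  4 * subper (frag T x y) ≤ minPeriod (frag T x y) ∧
  subper (frag T x y) = minPeriod (frag T a b) ∧
  2 * minPeriod (frag T x y) ≤ min y b' + 1 - max x a ∧
  IsPeriodOf (minPeriod (frag T x y)) (frag T (max x a) (min y b'))

/-- A `τ`-synchronizing set of `T` (Kempa–Kociumaka): consistency and density. -/
def SyncSet (T : List α) (τ : ℕ) (S : Set ℕ) : Prop :=
  (∀ i ∈ S, i + 2 * τ ≤ T.length) ∧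
  (∀ i j : ℕ, i + 2 * τ ≤ T.length → j + 2 * τ ≤ T.length →
    (T.drop i).take (2 * τ) = (T.drop j).take (2 * τ) → (i ∈ S ↔ j ∈ S)) ∧
  (∀ i : ℕ, i + 3 * τ - 1 ≤ T.length →
    ((∀ k ∈ S, k < i ∨ i + τ ≤ k) ↔
      3 * minPeriod ((T.drop i).take (3 * τ - 1)) ≤ τ))

/-
Suppose no position of `Sync` lies in `[a, a + p)`. Then for every `i ∈ [a, a + p - τ]` the
window `[i, i + τ)` misses `Sync`, so by density `T[i .. i + 3τ - 1)` has period at most `τ / 3`.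
Consecutive such fragments overlap in `3τ - 2 ≥ 2 · τ / 3` letters, so by Fine–Wilf their smallest
periods coincide; hence `T[a .. a + p + 2τ - 1)` has a common period `q ≤ τ / 3`. Combined with
the period `p` of the run, Fine–Wilf yields the period `gcd p q < p` of this prefix, and since the
prefix is longer than `p` it propagates to the whole run, contradicting the minimality of `p`.
Uniqueness of the sparse-Lyndon position holds because distinct positions have distinct suffixes.
-/

namespace List

theorem HasPeriod.reverse {w : List α} {p : ℕ} (h : w.HasPeriod p) : w.reverse.HasPeriod p := by
  rw [hasPeriod_iff_getElem?] at h ⊢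
  intro i hi
  rw [length_reverse] at hi
  rw [getElem?_reverse (by omega), getElem?_reverse (by omega)]
  have h' := h (w.length - 1 - (i + p)) (by omega)
  rwa [show w.length - 1 - (i + p) + p = w.length - 1 - i by omega, eq_comm] at h'

@[simp]
theorem hasPeriod_reverse {w : List α} {p : ℕ} : w.reverse.HasPeriod p ↔ w.HasPeriod p :=
  ⟨fun h => by simpa using h.reverse, HasPeriod.reverse⟩

/-- A word of period `r` is determined by its first `r` letters. -/
theorem HasPeriod.of_take {w : List α} {r g : ℕ} (hr : 0 < r) (hw : w.HasPeriod r)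
    (hg : (w.take r).HasPeriod g) (hgr : g ∣ r) : w.HasPeriod g := by
  rw [hasPeriod_iff_forall_getElem?_mod] at hw hg ⊢
  intro i hi
  have hir : i % r < r := Nat.mod_lt i hr
  have hgi : i % g ≤ i % r := Nat.mod_mod_of_dvd i hgr ▸ Nat.mod_le _ _
  have hil : i % r < w.length := (Nat.mod_le i r).trans_lt hi
  rw [hw i hi, ← getElem?_take_of_lt hir, hg _ (by simp [hir, hil]), Nat.mod_mod_of_dvd i hgr,
    getElem?_take_of_lt (hgi.trans_lt hir)]

theorem HasPeriod.gcd_of_prefix {v w : List α} {p q : ℕ} (hp : 0 < p) (hw : w.HasPeriod p)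
    (hvw : v <+: w) (hv : v.HasPeriod q) (hlen : p + q - p.gcd q ≤ v.length) :
    w.HasPeriod (p.gcd q) := by
  rcases Nat.eq_zero_or_pos q with rfl | hq
  · simpa using hw
  have hpv : p ≤ v.length := by have := Nat.gcd_le_right p hq; omega
  have hvg : v.HasPeriod (p.gcd q) := (hw.infix hvw.isInfix).gcd hv hlen
  have htake : w.take p <+: v :=
    prefix_of_prefix_length_le (take_prefix p w) hvw (by simp; omega)
  exact hw.of_take hp (hvg.infix htake.isInfix) (Nat.gcd_dvd_left p q)

theorem hasPeriod_of_forall_window {x : List α} {q ℓ : ℕ} (hqℓ : q < ℓ) (hℓ : ℓ ≤ x.length)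
    (h : ∀ s, s + ℓ ≤ x.length → ((x.drop s).take ℓ).HasPeriod q) : x.HasPeriod q := by
  rw [hasPeriod_iff_getElem?]
  intro i hi
  set s := min i (x.length - ℓ)
  have hs := hasPeriod_iff_getElem?.mp (h s (by omega)) (i - s) (by simp; omega)
  rwa [getElem?_take_of_lt (by omega), getElem?_take_of_lt (by omega), getElem?_drop,
    getElem?_drop, show s + (i - s) = i by omega, show s + (i - s + q) = i + q by omega] at hs

end List

theorem isPeriodOf_iff {p : ℕ} {S : List α} :
    IsPeriodOf p S ↔ 0 < p ∧ p ≤ S.length ∧ S.HasPeriod p := by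
  rw [List.hasPeriod_iff_getElem?]
  exact and_congr_right fun _ => and_congr_right fun _ =>
    forall_congr' fun i => ⟨fun h hi => h (by omega), fun h hi => h (by omega)⟩

theorem minPeriod_isPeriodOf {S : List α} (hS : S ≠ []) : IsPeriodOf (minPeriod S) S :=
  Nat.sInf_mem (s := {p | IsPeriodOf p S}) ⟨S.length, isPeriodOf_iff.2
    ⟨List.length_pos_iff.2 hS, le_rfl, List.hasPeriod_of_length_le _ _ le_rfl⟩⟩

theorem minPeriod_pos {S : List α} (hS : S ≠ []) : 0 < minPeriod S :=
  (minPeriod_isPeriodOf hS).1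

theorem hasPeriod_minPeriod {S : List α} (hS : S ≠ []) : S.HasPeriod (minPeriod S) :=
  (isPeriodOf_iff.1 (minPeriod_isPeriodOf hS)).2.2

theorem minPeriod_le {S : List α} {p : ℕ} (h : IsPeriodOf p S) : minPeriod S ≤ p :=
  Nat.sInf_le h

theorem minPeriod_reverse (S : List α) : minPeriod S.reverse = minPeriod S := by
  simp only [minPeriod, isPeriodOf_iff, List.length_reverse, List.hasPeriod_reverse]

theorem minPeriod_eq_of_prefix {v w : List α} (hvw : v <+: w) (hw : w ≠ [])
    (hlen : 2 * minPeriod w ≤ v.length) : minPeriod v = minPeriod w := by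
  obtain ⟨hp, hpw, hwp⟩ := isPeriodOf_iff.1 (minPeriod_isPeriodOf hw)
  have hv : v ≠ [] := by rintro rfl; simp at hlen; omega
  have hq := minPeriod_pos hv
  have hvq := hasPeriod_minPeriod hv
  have hqp : minPeriod v ≤ minPeriod w :=
    minPeriod_le (isPeriodOf_iff.2 ⟨hp, by omega, hwp.infix hvw.isInfix⟩)
  have hgcd := hwp.gcd_of_prefix hp hvw hvq (by omega)
  have hpg : minPeriod w ≤ (minPeriod w).gcd (minPeriod v) := minPeriod_le <| isPeriodOf_iff.2
    ⟨Nat.gcd_pos_of_pos_left _ hp, (Nat.gcd_le_left _ hp).trans hpw, hgcd⟩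
  have := Nat.gcd_le_right (minPeriod w) hq
  omega

theorem minPeriod_eq_of_suffix {v w : List α} (hvw : v <:+ w) (hw : w ≠ [])
    (hlen : 2 * minPeriod w ≤ v.length) : minPeriod v = minPeriod w := by
  simpa [minPeriod_reverse] using
    minPeriod_eq_of_prefix (List.reverse_prefix.2 hvw) (by simpa) (by simpa [minPeriod_reverse])

theorem minPeriod_window_succ {x : List α} {i ℓ : ℕ} (hx : i + 1 + ℓ ≤ x.length)
    (h : 2 * minPeriod ((x.drop i).take ℓ) < ℓ)
    (h' : 2 * minPeriod ((x.drop (i + 1)).take ℓ) < ℓ) :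
    minPeriod ((x.drop (i + 1)).take ℓ) = minPeriod ((x.drop i).take ℓ) := by
  set V := (x.drop (i + 1)).take (ℓ - 1)
  have hV : V.length = ℓ - 1 := by simp [V]; omega
  have hsuf : V <:+ (x.drop i).take ℓ := by
    have : V = ((x.drop i).take ℓ).drop 1 := by simp [V, List.drop_take, List.drop_drop]
    exact this ▸ List.drop_suffix _ _
  have hpre : V <+: (x.drop (i + 1)).take ℓ := by simp [V]
  rw [← minPeriod_eq_of_prefix hpre (List.ne_nil_of_length_pos (by simp; omega)) (by omega),
    minPeriod_eq_of_suffix hsuf (List.ne_nil_of_length_pos (by simp; omega)) (by omega)]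

theorem hasPeriod_take_of_forall_window_minPeriod {x : List α} {n ℓ : ℕ}
    (hx : n + ℓ ≤ x.length) (h : ∀ d ≤ n, 2 * minPeriod ((x.drop d).take ℓ) < ℓ) :
    (x.take (n + ℓ)).HasPeriod (minPeriod (x.take ℓ)) := by
  have hconst : ∀ d ≤ n, minPeriod ((x.drop d).take ℓ) = minPeriod (x.take ℓ) := by
    intro d
    induction d with
    | zero => simp
    | succ d ih =>
      intro hd
      rw [← ih (by omega)]
      exact minPeriod_window_succ (by omega) (h d (by omega)) (h (d + 1) hd)
  have h₀ := h 0 (Nat.zero_le _)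
  rw [List.drop_zero] at h₀
  refine List.hasPeriod_of_forall_window (ℓ := ℓ) (by omega) (by simp; omega) fun s hs => ?_
  rw [List.length_take] at hs
  have hwin : ((x.take (n + ℓ)).drop s).take ℓ = (x.drop s).take ℓ := by
    rw [List.drop_take, List.take_take]
    congr 1; omega
  rw [hwin, ← hconst s (by omega)]
  exact hasPeriod_minPeriod (List.ne_nil_of_length_pos (by simp; omega))

theorem SyncSet.exists_mem_Ico_of_frag {T : List α} {τ : ℕ} {S : Set ℕ} {a b : ℕ}
    (hτ : 1 ≤ τ) (hS : SyncSet T τ S) (hb : b < T.length) (hpτ : τ ≤ minPeriod (frag T a b))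
    (hlen : minPeriod (frag T a b) + 2 * τ - 1 ≤ b + 1 - a) :
    ∃ i ∈ S, a ≤ i ∧ i < a + minPeriod (frag T a b) := by
  have hR : frag T a b ≠ [] := List.ne_nil_of_length_pos (by simp [frag]; omega)
  have hp := minPeriod_pos hR
  have hRp := hasPeriod_minPeriod hR
  generalize hpR : minPeriod (frag T a b) = p at *
  by_contra! hno
  have hsmall : ∀ d ≤ p - τ, 3 * minPeriod (((T.drop a).drop d).take (3 * τ - 1)) ≤ τ :=
    fun d hd => List.drop_drop ▸ (hS.2.2 (a + d) (by omega)).1 fun k hk => by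
      rcases lt_or_ge k a with hka | hka
      · omega
      · have := hno k hk hka; omega
  have hU : ((T.drop a).take (p - τ + (3 * τ - 1))).HasPeriod
      (minPeriod ((T.drop a).take (3 * τ - 1))) :=
    hasPeriod_take_of_forall_window_minPeriod (by simp; omega) fun d hd => by
      have := hsmall d hd; omega
  have hq3 : 3 * minPeriod ((T.drop a).take (3 * τ - 1)) ≤ τ := by
    simpa using hsmall 0 (Nat.zero_le _)
  have hq := minPeriod_pos (S := (T.drop a).take (3 * τ - 1))
    (List.ne_nil_of_length_pos (by simp; omega))
  generalize minPeriod ((T.drop a).take (3 * τ - 1)) = q at hU hq hq3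
  have hpre : (T.drop a).take (p - τ + (3 * τ - 1)) <+: frag T a b :=
    List.prefix_take_iff.2 ⟨List.take_prefix _ _, by simp; omega⟩
  have hg := hRp.gcd_of_prefix hp hpre hU (by simp; omega)
  have hpg : p ≤ p.gcd q := hpR ▸ minPeriod_le <| isPeriodOf_iff.2
    ⟨Nat.gcd_pos_of_pos_left _ hp, (Nat.gcd_le_left _ hp).trans (by simp [frag]; omega), hg⟩
  have := Nat.gcd_le_right p hq
  omega

theorem Set.Finite.existsUnique_forall_le_of_injOn {ι β : Type*} [LinearOrder β] {s : Set ι}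
    {f : ι → β} (hs : s.Finite) (hne : s.Nonempty) (hf : s.InjOn f) :
    ∃! i, i ∈ s ∧ ∀ j ∈ s, f i ≤ f j := by
  obtain ⟨i, hi, hmin⟩ := s.exists_min_image f hs hne
  exact ⟨i, ⟨hi, hmin⟩, fun j ⟨hj, hjmin⟩ => hf hj hi ((hjmin i hi).antisymm (hmin j hj))⟩

/-- Every run with period at least `2τ - 1` contains a synchronizing position
in its first period of positions; hence its sparse-Lyndon position exists and
is unique. -/
theorem sparse_lyndon_position_exists [LinearOrder α] (T : List α)
    (τ : ℕ) (S : Set ℕ) (a b : ℕ)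
    (hτ : 1 ≤ τ) (hS : SyncSet T τ S) (hrun : IsRun T a b)
    (hp : 2 * τ - 1 ≤ minPeriod (frag T a b)) :
    (∃ i ∈ S, a ≤ i ∧ i < a + minPeriod (frag T a b)) ∧
    ∃! i : ℕ, i ∈ S ∧ a ≤ i ∧ i < a + minPeriod (frag T a b) ∧
      ∀ j ∈ S, a ≤ j → j < a + minPeriod (frag T a b) → T.drop i ≤ T.drop j := by
  obtain ⟨hab, hb, h2p, -, -⟩ := hrun
  have hex := hS.exists_mem_Ico_of_frag (a := a) hτ hb (by omega) (by omega)
  refine ⟨hex, ?_⟩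
  have hfin : {i | i ∈ S ∧ a ≤ i ∧ i < a + minPeriod (frag T a b)}.Finite :=
    (Set.finite_Ico a (a + minPeriod (frag T a b))).subset fun i hi => ⟨hi.2.1, hi.2.2⟩
  have hinj : {i | i ∈ S ∧ a ≤ i ∧ i < a + minPeriod (frag T a b)}.InjOn T.drop :=
    fun i ⟨_, _, hi⟩ j ⟨_, _, hj⟩ hij => by rw [List.drop_eq_drop_iff] at hij; omega
  simpa only [Set.mem_ofPred_eq, and_imp, and_assoc] using
    hfin.existsUnique_forall_le_of_injOn hex hinj
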